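/- For any finite type σ over Ω and any sequence of countable ordinals (α_ξ)_{ξ<ζ} indexed by a countable ordinal ζ ≥ 1, limsup_{ξ→ζ} Iter_{α_ξ}^σ =hp Iter_{limsup_{ξ→ζ} α_ξ}^σ. -/

import Mathlib

/-!  Framework: finite type structure over Ω = countable ordinals,
     limsup/liminf, transfinite iteration functionals, hereditarily
     positive and hereditarily monotone functionals. -/

noncomputable section
namespace IterOrd

open Ordinal

theorem omega1_pos : (0 : Ordinal) < ω₁ := Ordinal.omega0_pos.trans Ordinal.omega0_lt_omega_one

/-- `Om` is Ω, the set of countable ordinals (ordinals `< ω₁`). -/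
abbrev Om : Type 1 := {o : Ordinal // o < ω₁}

/-- Infimum of a subset of Ω (the minimum for nonempty sets; `0` for `∅`). -/
def infOm (s : Set Om) : Om :=
  ⟨sInf (Subtype.val '' s), by
    rcases (Subtype.val '' s).eq_empty_or_nonempty with h | h
    · rw [h]; simpa using omega1_pos
    · obtain ⟨x, _, he⟩ := csInf_mem h
      exact he ▸ x.2⟩

/-- Supremum of a subset of Ω.  Whenever the supremum of the set exists in Ω
(in particular for every countable subset, by regularity of `ω₁`) this is the
genuine supremum; otherwise it takes a junk value. -/
def supOm (s : Set Om) : Om :=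
  if h : sSup (Subtype.val '' s) < ω₁ then ⟨sSup (Subtype.val '' s), h⟩ else ⟨0, omega1_pos⟩

/-- Finite types over the base type `o` (interpreted as Ω). -/
inductive Ty : Type
  | base : Ty
  | arrow : Ty → Ty → Ty
deriving DecidableEq

/-- The full type structure over Ω: `El base = Ω` and
`El (arrow σ τ)` is the set of all functions `El σ → El τ`. -/
@[reducible] def El : Ty → Type 1
  | .base => Om
  | .arrow σ τ => El σ → El τ

/-- The order on each `El σ`: the ordinal order at base type, pointwise at arrow types. -/
def Le : (σ : Ty) → El σ → El σ → Prop
  | .base => fun x y => x ≤ y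
  | .arrow σ τ => fun f g => ∀ x : El σ, Le τ (f x) (g x)

/-- Suprema, computed pointwise at function types. -/
def supEl : (σ : Ty) → Set (El σ) → El σ
  | .base => supOm
  | .arrow σ τ => fun S (x : El σ) => supEl τ ((fun f : El (.arrow σ τ) => f x) '' S)

/-- Infima, computed pointwise at function types. -/
def infEl : (σ : Ty) → Set (El σ) → El σ
  | .base => infOm
  | .arrow σ τ => fun S (x : El σ) => infEl τ ((fun f : El (.arrow σ τ) => f x) '' S)

/-- `limsup_{ξ→ζ} f ξ = inf_{γ<ζ} sup_{γ≤ξ<ζ} f ξ`. -/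
def limsupEl (σ : Ty) (ζ : Ordinal) (f : ∀ ξ : Ordinal, ξ < ζ → El σ) : El σ :=
  infEl σ {y | ∃ γ, ∃ _ : γ < ζ, y = supEl σ {z | ∃ ξ, ∃ h : ξ < ζ, γ ≤ ξ ∧ z = f ξ h}}

/-- `liminf_{ξ→ζ} f ξ = sup_{γ<ζ} inf_{γ≤ξ<ζ} f ξ`. -/
def liminfEl (σ : Ty) (ζ : Ordinal) (f : ∀ ξ : Ordinal, ξ < ζ → El σ) : El σ :=
  supEl σ {y | ∃ γ, ∃ _ : γ < ζ, y = infEl σ {z | ∃ ξ, ∃ h : ξ < ζ, γ ≤ ξ ∧ z = f ξ h}}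

/-- `limsup` of a ζ-indexed sequence of ordinals. -/
def oLimsup (ζ : Ordinal) (a : Ordinal → Ordinal) : Ordinal :=
  sInf {s | ∃ γ, γ < ζ ∧ s = sSup (a '' {ξ | γ ≤ ξ ∧ ξ < ζ})}

/-- `liminf` of a ζ-indexed sequence of ordinals. -/
def oLiminf (ζ : Ordinal) (a : Ordinal → Ordinal) : Ordinal :=
  sSup {s | ∃ γ, γ < ζ ∧ s = sInf (a '' {ξ | γ ≤ ξ ∧ ξ < ζ})}

/-- The α-iteration functional of type σ:
`Iter 0 f x = x`, `Iter (α+1) f x = f (Iter α f x)`, and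
`Iter μ f x = limsup_{ξ→μ} Iter ξ f x` for limit μ. -/
def Iter (σ : Ty) (α : Ordinal) : (El σ → El σ) → El σ → El σ :=
  Ordinal.limitRecOn (motive := fun _ => (El σ → El σ) → El σ → El σ) α
    (fun _ x => x)
    (fun _ ih f x => f (ih f x))
    (fun μ _ ih f x => limsupEl σ μ (fun ξ h => ih ξ h f x))

/-- The pair (hereditarily positive, ≤hp), defined simultaneously by recursion on the type.
Every element of `Ω` and of `Ω_{ρ→τ}` with `ρ ≠ τ` is h.p., and `≤hp` there is `≤`;
`f : Ω_{τ→τ}` is h.p. iff it preserves h.p., is inflationary on h.p. arguments and is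
monotone (w.r.t. `≤hp`) on h.p. arguments; `f ≤hp f'` on `Ω_{τ→τ}` iff `f x ≤hp f' x`
for every h.p. `x`. -/
def HPaux : (σ : Ty) → (El σ → Prop) × (El σ → El σ → Prop)
  | .base => ⟨fun _ => True, fun x y => x ≤ y⟩
  | .arrow ρ τ =>
      ⟨fun f =>
        if h : ρ = τ then
          (∀ x, (HPaux ρ).1 x → (HPaux τ).1 (f x)) ∧
          (∀ x, (HPaux ρ).1 x → (HPaux τ).2 (cast (congrArg El h) x) (f x)) ∧
          (∀ x y, (HPaux ρ).1 x → (HPaux ρ).1 y → (HPaux ρ).2 x y → (HPaux τ).2 (f x) (f y))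
        else True,
       fun f g =>
        if ρ = τ then ∀ x, (HPaux ρ).1 x → (HPaux τ).2 (f x) (g x)
        else Le (.arrow ρ τ) f g⟩

/-- Hereditarily positive functionals. -/
def Hp (σ : Ty) : El σ → Prop := (HPaux σ).1

/-- The order `≤hp`. -/
def HpLe (σ : Ty) : El σ → El σ → Prop := (HPaux σ).2

/-- `f =hp g` iff `f ≤hp g` and `g ≤hp f`. -/
def HpEq (σ : Ty) (f g : El σ) : Prop := HpLe σ f g ∧ HpLe σ g f

/-- The pair (hereditarily monotone, ≤ on the hereditarily monotone structure),
by recursion on the type.  `f` is hereditarily monotone iff it maps hereditarily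
monotone arguments to hereditarily monotone values, monotonically; the order is
pointwise over hereditarily monotone arguments (i.e. the order of `Ω^mon`). -/
def HMaux : (σ : Ty) → (El σ → Prop) × (El σ → El σ → Prop)
  | .base => ⟨fun _ => True, fun x y => x ≤ y⟩
  | .arrow σ τ =>
      ⟨fun f =>
        (∀ x, (HMaux σ).1 x → (HMaux τ).1 (f x)) ∧
        (∀ x y, (HMaux σ).1 x → (HMaux σ).1 y → (HMaux σ).2 x y → (HMaux τ).2 (f x) (f y)),
       fun f g => ∀ x, (HMaux σ).1 x → (HMaux τ).2 (f x) (g x)⟩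

/-- Hereditarily monotone functionals: the members of the type structure `Ω^mon`. -/
def HM (σ : Ty) : El σ → Prop := (HMaux σ).1

/-- The (pointwise) order of the hereditarily monotone type structure `Ω^mon`. -/
def LeHM (σ : Ty) : El σ → El σ → Prop := (HMaux σ).2

/-- Equality in the hereditarily monotone type structure `Ω^mon`. -/
def EqHM (σ : Ty) (f g : El σ) : Prop := LeHM σ f g ∧ LeHM σ g f

/-! On h.p. arguments, iteration only climbs: since an h.p. `f` is inflationary and monotone,
`α ≤ α'` gives `Iter_α f x ≤hp Iter_α' f x`. Let `β` be the limsup of the `α_ξ` and `β_γ` the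
supremum of the tail `{α_ξ | γ ≤ ξ < ζ}`. The infimum `β` is attained by some `β_γ₀`, so all
`Iter_{α_ξ}` with `ξ ≥ γ₀` lie below `Iter_β`, and hence so does the limsup. Conversely
`β ≤ β_γ` for every `γ`, and `Iter_{β_γ}` lies below the supremum of the tail iterates: either
`β_γ` is attained, or it is a limit and `Iter_{β_γ}` is a limsup of iterates of smaller
ordinals, each dominated by a tail iterate. Countability of `ζ` and of the `α_ξ` keeps every
supremum a genuine one, Ω having only countable suprema. -/

theorem countable_Iio_of_lt_omega_one {ζ : Ordinal} (hζ : ζ < ω₁) : (Set.Iio ζ).Countable := by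
  rw [← Cardinal.le_aleph0_iff_set_countable, Cardinal.mk_Iio_ordinal, Cardinal.lift_le_aleph0,
    ← Cardinal.lt_aleph_one_iff, ← Cardinal.lt_ord, Cardinal.ord_aleph]
  exact hζ

theorem sSup_lt_omega_one {s : Set Ordinal} (hc : s.Countable) (hs : ∀ x ∈ s, x < ω₁) :
    sSup s < ω₁ := by
  have := hc.to_subtype
  rw [sSup_eq_iSup']
  exact Ordinal.iSup_lt_omega_one fun x => hs x x.2

theorem bddAbove_val_image (S : Set Om) : BddAbove (Subtype.val '' S) :=
  ⟨ω₁, by rintro _ ⟨w, _, rfl⟩; exact w.2.le⟩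

theorem supOm_val {S : Set Om} (h : sSup (Subtype.val '' S) < ω₁) :
    (supOm S).1 = sSup (Subtype.val '' S) := by
  rw [supOm, dif_pos h]

theorem Le.refl : ∀ {σ : Ty} (x : El σ), Le σ x x
  | .base, _ => le_rfl
  | .arrow _ _, f => fun x => Le.refl (f x)

theorem Le.trans : ∀ {σ : Ty} {x y z : El σ}, Le σ x y → Le σ y z → Le σ x z
  | .base, _, _, _, h₁, h₂ => le_trans h₁ h₂
  | .arrow _ _, _, _, _, h₁, h₂ => fun x => (h₁ x).trans (h₂ x)

theorem le_supEl : ∀ {σ : Ty} {S : Set (El σ)}, S.Countable → ∀ {z}, z ∈ S → Le σ z (supEl σ S)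
  | .base, S, hc, z, hz => by
    show z.1 ≤ (supOm S).1
    rw [supOm_val (sSup_lt_omega_one (hc.image _) (by rintro _ ⟨w, _, rfl⟩; exact w.2))]
    exact le_csSup (bddAbove_val_image S) ⟨z, hz, rfl⟩
  | .arrow _ _, _, hc, z, hz => fun x => le_supEl (hc.image _) ⟨z, hz, rfl⟩

theorem supEl_le : ∀ {σ : Ty} {S : Set (El σ)} {y : El σ}, (∀ z ∈ S, Le σ z y) →
    Le σ (supEl σ S) y
  | .base, S, y, h => by
    have hle : sSup (Subtype.val '' S) ≤ y.1 :=
      csSup_le' (by rintro _ ⟨w, hw, rfl⟩; exact h w hw)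
    show (supOm S).1 ≤ y.1
    rw [supOm_val (hle.trans_lt y.2)]
    exact hle
  | .arrow _ _, _, _, h => fun x => supEl_le (by rintro _ ⟨z, hz, rfl⟩; exact h z hz x)

theorem infEl_le : ∀ {σ : Ty} {S : Set (El σ)} {z : El σ}, z ∈ S → Le σ (infEl σ S) z
  | .base, _, z, hz => show sInf _ ≤ z.1 from csInf_le (OrderBot.bddBelow _) ⟨z, hz, rfl⟩
  | .arrow _ _, _, z, hz => fun _ => infEl_le ⟨z, hz, rfl⟩

theorem le_infEl : ∀ {σ : Ty} {S : Set (El σ)} {y : El σ}, S.Nonempty → (∀ z ∈ S, Le σ y z) →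
    Le σ y (infEl σ S)
  | .base, _, y, hne, h =>
    show y.1 ≤ sInf _ from le_csInf (hne.image _) (by rintro _ ⟨w, hw, rfl⟩; exact h w hw)
  | .arrow _ _, _, _, hne, h => fun x =>
    le_infEl (hne.image _) (by rintro _ ⟨z, hz, rfl⟩; exact h z hz x)

theorem hp_arrow_of_ne {ρ τ : Ty} (h : ρ ≠ τ) (f : El (.arrow ρ τ)) : Hp (.arrow ρ τ) f := by
  simp only [Hp, HPaux, dif_neg h]

theorem hp_arrow_self_iff {σ : Ty} (f : El (.arrow σ σ)) :
    Hp (.arrow σ σ) f ↔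
      (∀ x, Hp σ x → Hp σ (f x)) ∧ (∀ x, Hp σ x → HpLe σ x (f x)) ∧
      (∀ x y, Hp σ x → Hp σ y → HpLe σ x y → HpLe σ (f x) (f y)) := by
  simp only [Hp, HpLe, HPaux, dif_pos, cast_eq]

theorem hpLe_arrow_self_iff {σ : Ty} (f g : El (.arrow σ σ)) :
    HpLe (.arrow σ σ) f g ↔ ∀ x, Hp σ x → HpLe σ (f x) (g x) := by
  simp only [Hp, HpLe, HPaux, if_pos]

theorem hpLe_arrow_of_ne_iff {ρ τ : Ty} (h : ρ ≠ τ) (f g : El (.arrow ρ τ)) :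
    HpLe (.arrow ρ τ) f g ↔ Le (.arrow ρ τ) f g := by
  simp only [HpLe, HPaux, if_neg h]

theorem hpLe_arrow_self_iff₂ {σ : Ty} (F G : El (.arrow (.arrow σ σ) (.arrow σ σ))) :
    HpLe (.arrow (.arrow σ σ) (.arrow σ σ)) F G ↔
      ∀ f, Hp (.arrow σ σ) f → ∀ x, Hp σ x → HpLe σ (F f x) (G f x) := by
  simp only [hpLe_arrow_self_iff]

theorem HpLe.refl : ∀ {σ : Ty} (x : El σ), HpLe σ x x
  | .base, _ => le_rfl
  | .arrow ρ τ, f => by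
    by_cases h : ρ = τ
    · subst h
      exact (hpLe_arrow_self_iff f f).2 fun x _ => HpLe.refl (f x)
    · exact (hpLe_arrow_of_ne_iff h f f).2 (Le.refl f)

theorem HpLe.trans : ∀ {σ : Ty} {x y z : El σ}, HpLe σ x y → HpLe σ y z → HpLe σ x z
  | .base, _, _, _, h₁, h₂ => le_trans h₁ h₂
  | .arrow ρ τ, f, g, k, h₁, h₂ => by
    by_cases h : ρ = τ
    · subst h
      rw [hpLe_arrow_self_iff] at h₁ h₂ ⊢
      exact fun x hx => (h₁ x hx).trans (h₂ x hx)
    · rw [hpLe_arrow_of_ne_iff h] at h₁ h₂ ⊢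
      exact h₁.trans h₂

theorem hpLe_supEl : ∀ {σ : Ty} {S : Set (El σ)}, S.Countable → ∀ {z}, z ∈ S →
    HpLe σ z (supEl σ S)
  | .base, _, hc, _, hz => le_supEl (σ := .base) hc hz
  | .arrow ρ τ, S, hc, z, hz => by
    by_cases h : ρ = τ
    · subst h
      exact (hpLe_arrow_self_iff _ _).2 fun _ _ => hpLe_supEl (hc.image _) ⟨z, hz, rfl⟩
    · exact (hpLe_arrow_of_ne_iff h _ _).2 (le_supEl hc hz)

theorem supEl_hpLe : ∀ {σ : Ty} {S : Set (El σ)} {y : El σ}, (∀ z ∈ S, HpLe σ z y) →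
    HpLe σ (supEl σ S) y
  | .base, _, _, h => supEl_le (σ := .base) h
  | .arrow ρ τ, S, y, h => by
    by_cases hρτ : ρ = τ
    · subst hρτ
      refine (hpLe_arrow_self_iff _ _).2 fun x hx => supEl_hpLe ?_
      rintro _ ⟨z, hz, rfl⟩
      exact (hpLe_arrow_self_iff z y).1 (h z hz) x hx
    · exact (hpLe_arrow_of_ne_iff hρτ _ _).2
        (supEl_le fun z hz => (hpLe_arrow_of_ne_iff hρτ z y).1 (h z hz))

theorem infEl_hpLe : ∀ {σ : Ty} {S : Set (El σ)} {z : El σ}, z ∈ S → HpLe σ (infEl σ S) z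
  | .base, _, _, hz => infEl_le (σ := .base) hz
  | .arrow ρ τ, S, z, hz => by
    by_cases h : ρ = τ
    · subst h
      exact (hpLe_arrow_self_iff _ _).2 fun _ _ => infEl_hpLe ⟨z, hz, rfl⟩
    · exact (hpLe_arrow_of_ne_iff h _ _).2 (infEl_le hz)

theorem hpLe_infEl : ∀ {σ : Ty} {S : Set (El σ)} {y : El σ}, S.Nonempty →
    (∀ z ∈ S, HpLe σ y z) → HpLe σ y (infEl σ S)
  | .base, _, _, hne, h => le_infEl (σ := .base) hne h
  | .arrow ρ τ, S, y, hne, h => by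
    by_cases hρτ : ρ = τ
    · subst hρτ
      refine (hpLe_arrow_self_iff _ _).2 fun x hx => hpLe_infEl (hne.image _) ?_
      rintro _ ⟨z, hz, rfl⟩
      exact (hpLe_arrow_self_iff y z).1 (h z hz) x hx
    · exact (hpLe_arrow_of_ne_iff hρτ _ _).2
        (le_infEl hne fun z hz => (hpLe_arrow_of_ne_iff hρτ y z).1 (h z hz))

theorem hp_supEl : ∀ {σ : Ty} {S : Set (El σ)}, S.Countable → S.Nonempty →
    (∀ z ∈ S, Hp σ z) → Hp σ (supEl σ S)
  | .base, _, _, _, _ => trivial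
  | .arrow ρ τ, S, hc, hne, hS => by
    by_cases h : ρ = τ
    · subst h
      have hS' z (hz : z ∈ S) := (hp_arrow_self_iff z).1 (hS z hz)
      obtain ⟨z₀, hz₀⟩ := hne
      refine (hp_arrow_self_iff _).2 ⟨fun x hx => ?_, fun x hx => ?_, fun x y hx hy hxy => ?_⟩
      · refine hp_supEl (hc.image _) ⟨_, z₀, hz₀, rfl⟩ ?_
        rintro _ ⟨z, hz, rfl⟩
        exact (hS' z hz).1 x hx
      · exact ((hS' z₀ hz₀).2.1 x hx).trans (hpLe_supEl (hc.image _) ⟨z₀, hz₀, rfl⟩)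
      · refine supEl_hpLe ?_
        rintro _ ⟨z, hz, rfl⟩
        exact ((hS' z hz).2.2 x y hx hy hxy).trans (hpLe_supEl (hc.image _) ⟨z, hz, rfl⟩)
    · exact hp_arrow_of_ne h _

theorem hp_infEl : ∀ {σ : Ty} {S : Set (El σ)}, S.Nonempty → (∀ z ∈ S, Hp σ z) →
    Hp σ (infEl σ S)
  | .base, _, _, _ => trivial
  | .arrow ρ τ, S, hne, hS => by
    by_cases h : ρ = τ
    · subst h
      have hS' z (hz : z ∈ S) := (hp_arrow_self_iff z).1 (hS z hz)
      refine (hp_arrow_self_iff _).2 ⟨fun x hx => ?_, fun x hx => ?_, fun x y hx hy hxy => ?_⟩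
      · refine hp_infEl (hne.image _) ?_
        rintro _ ⟨z, hz, rfl⟩
        exact (hS' z hz).1 x hx
      · refine hpLe_infEl (hne.image _) ?_
        rintro _ ⟨z, hz, rfl⟩
        exact (hS' z hz).2.1 x hx
      · refine hpLe_infEl (hne.image _) ?_
        rintro _ ⟨z, hz, rfl⟩
        exact (infEl_hpLe (S := (· x) '' S) ⟨z, hz, rfl⟩).trans ((hS' z hz).2.2 x y hx hy hxy)
    · exact hp_arrow_of_ne h _

def tailSet {σ : Ty} {ζ : Ordinal} (f : ∀ ξ, ξ < ζ → El σ) (γ : Ordinal) : Set (El σ) :=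
  {z | ∃ ξ, ∃ h : ξ < ζ, γ ≤ ξ ∧ z = f ξ h}

section Limsup

variable {σ : Ty} {ζ : Ordinal} {f : ∀ ξ, ξ < ζ → El σ}

theorem tailSet_countable (hζ : ζ < ω₁) (γ : Ordinal) : (tailSet f γ).Countable := by
  have := (countable_Iio_of_lt_omega_one hζ).to_subtype
  refine (Set.countable_range fun p : Set.Iio ζ => f p.1 p.2).mono ?_
  rintro _ ⟨ξ, h, _, rfl⟩
  exact ⟨⟨ξ, h⟩, rfl⟩

theorem hpLe_supEl_tailSet (hζ : ζ < ω₁) {γ ξ : Ordinal} (hξ : ξ < ζ) (hγξ : γ ≤ ξ) :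
    HpLe σ (f ξ hξ) (supEl σ (tailSet f γ)) :=
  hpLe_supEl (tailSet_countable hζ γ) ⟨ξ, hξ, hγξ, rfl⟩

theorem limsupEl_hpLe {γ : Ordinal} (hγ : γ < ζ) {y : El σ}
    (h : ∀ ξ (hξ : ξ < ζ), γ ≤ ξ → HpLe σ (f ξ hξ) y) : HpLe σ (limsupEl σ ζ f) y := by
  refine (infEl_hpLe (S := {y | ∃ γ, ∃ _ : γ < ζ, y = supEl σ (tailSet f γ)})
    ⟨γ, hγ, rfl⟩).trans (supEl_hpLe ?_)
  rintro _ ⟨ξ, hξ, hγξ, rfl⟩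
  exact h ξ hξ hγξ

theorem hpLe_limsupEl (h0 : 0 < ζ) {y : El σ}
    (h : ∀ γ < ζ, HpLe σ y (supEl σ (tailSet f γ))) : HpLe σ y (limsupEl σ ζ f) :=
  hpLe_infEl ⟨_, 0, h0, rfl⟩ <| by
    rintro _ ⟨γ, hγ, rfl⟩
    exact h γ hγ

theorem hp_limsupEl (hζ : ζ < ω₁) (h0 : 0 < ζ) (hf : ∀ ξ h, Hp σ (f ξ h)) :
    Hp σ (limsupEl σ ζ f) :=
  hp_infEl ⟨_, 0, h0, rfl⟩ <| by
    rintro _ ⟨γ, hγ, rfl⟩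
    refine hp_supEl (tailSet_countable hζ γ) ⟨_, γ, hγ, le_rfl, rfl⟩ ?_
    rintro _ ⟨ξ, hξ, _, rfl⟩
    exact hf ξ hξ

end Limsup

section Iter

variable {σ : Ty}

theorem iter_zero (f : El σ → El σ) (x : El σ) : Iter σ 0 f x = x := by
  rw [Iter, Ordinal.limitRecOn_zero]

theorem iter_add_one (α : Ordinal) (f : El σ → El σ) (x : El σ) :
    Iter σ (α + 1) f x = f (Iter σ α f x) := by
  unfold Iter
  rw [Ordinal.limitRecOn_add_one]

theorem iter_limit {μ : Ordinal} (hμ : Order.IsSuccLimit μ) (f : El σ → El σ) (x : El σ) :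
    Iter σ μ f x = limsupEl σ μ (fun ξ _ => Iter σ ξ f x) := by
  unfold Iter
  rw [Ordinal.limitRecOn_limit _ _ _ _ hμ]

variable {f : El σ → El σ} {x : El σ}

theorem hp_iter {α : Ordinal} (hα : α < ω₁) (hf : Hp (.arrow σ σ) f) (hx : Hp σ x) :
    Hp σ (Iter σ α f x) := by
  induction α using Ordinal.limitRecOn with
  | zero => rwa [iter_zero]
  | add_one α ih =>
    rw [iter_add_one]
    exact ((hp_arrow_self_iff f).1 hf).1 _ (ih ((lt_add_one α).trans hα))
  | limit μ hμ ih =>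
    rw [iter_limit hμ]
    exact hp_limsupEl hα hμ.pos fun ξ h => ih ξ h (h.trans hα)

theorem iter_hpLe_iter {α β : Ordinal} (hαβ : α ≤ β) (hβ : β < ω₁) (hf : Hp (.arrow σ σ) f)
    (hx : Hp σ x) : HpLe σ (Iter σ α f x) (Iter σ β f x) := by
  induction β using Ordinal.limitRecOn generalizing α with
  | zero =>
    rw [nonpos_iff_eq_zero.1 hαβ]
    exact HpLe.refl _
  | add_one β ih =>
    rcases hαβ.eq_or_lt with rfl | hlt
    · exact HpLe.refl _
    have hβ' : β < ω₁ := (lt_add_one β).trans hβ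
    rw [iter_add_one]
    exact (ih (Order.lt_add_one_iff.1 hlt) hβ').trans
      (((hp_arrow_self_iff f).1 hf).2.1 _ (hp_iter hβ' hf hx))
  | limit μ hμ ih =>
    rcases hαβ.eq_or_lt with rfl | hlt
    · exact HpLe.refl _
    rw [iter_limit hμ]
    refine hpLe_limsupEl hμ.pos fun γ hγ => ?_
    have hmax : max α γ < μ := max_lt hlt hγ
    exact (ih _ hmax (le_max_left α γ) (hmax.trans hβ)).trans
      (hpLe_supEl_tailSet (f := fun ξ _ => Iter σ ξ f x) hβ hmax (le_max_right α γ))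

theorem iter_hpLe_of_isLUB {S : Set Ordinal} {β : Ordinal} (hS : IsLUB S β) (hne : S.Nonempty)
    (hβ : β < ω₁) (hf : Hp (.arrow σ σ) f) (hx : Hp σ x) {y : El σ}
    (hy : ∀ s ∈ S, HpLe σ (Iter σ s f x) y) : HpLe σ (Iter σ β f x) y := by
  by_cases hlim : Order.IsSuccLimit β
  · rw [iter_limit hlim]
    refine limsupEl_hpLe hlim.pos fun η hη _ => ?_
    obtain ⟨s, hs, hηs, hsβ⟩ := hS.exists_between hη
    exact (iter_hpLe_iter hηs.le (hsβ.trans_lt hβ) hf hx).trans (hy s hs)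
  · exact hy β (hS.mem_of_nonempty_of_not_isSuccLimit hne hlim)

end Iter

section OLimsup

variable {ζ : Ordinal} {a : Ordinal → Ordinal}

theorem oLimsup_le_sSup_image_Ico {γ : Ordinal} (hγ : γ < ζ) :
    oLimsup ζ a ≤ sSup (a '' Set.Ico γ ζ) :=
  csInf_le (OrderBot.bddBelow _) ⟨γ, hγ, rfl⟩

theorem exists_forall_le_oLimsup (h0 : 0 < ζ) (hbdd : BddAbove (a '' Set.Iio ζ)) :
    ∃ γ₀ < ζ, ∀ ξ ∈ Set.Ico γ₀ ζ, a ξ ≤ oLimsup ζ a := by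
  obtain ⟨γ₀, hγ₀, heq⟩ : oLimsup ζ a ∈ {s | ∃ γ, γ < ζ ∧ s = sSup (a '' Set.Ico γ ζ)} :=
    csInf_mem ⟨_, 0, h0, rfl⟩
  refine ⟨γ₀, hγ₀, fun ξ hξ => heq ▸ le_csSup ?_ ⟨ξ, hξ, rfl⟩⟩
  exact hbdd.mono (Set.image_mono Set.Ico_subset_Iio_self)

theorem sSup_image_Ico_lt_omega_one (hζ : ζ < ω₁) (ha : ∀ ξ, ξ < ζ → a ξ < ω₁) (γ : Ordinal) :
    sSup (a '' Set.Ico γ ζ) < ω₁ :=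
  sSup_lt_omega_one (((countable_Iio_of_lt_omega_one hζ).mono Set.Ico_subset_Iio_self).image a)
    (by rintro _ ⟨ξ, hξ, rfl⟩; exact ha ξ hξ.2)

end OLimsup

/-- For any finite type `σ` and any sequence of countable ordinals
`(α_ξ)_{ξ<ζ}` with `ζ ≥ 1` countable:
`limsup_{ξ→ζ} Iter_{α_ξ}^σ =hp Iter_{limsup_{ξ→ζ} α_ξ}^σ`. -/
theorem limsup_iter_hpEq_iter_limsup (σ : Ty) (ζ : Ordinal) (hζ1 : 1 ≤ ζ) (hζ : ζ < ω₁)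
    (a : Ordinal → Ordinal) (ha : ∀ ξ, ξ < ζ → a ξ < ω₁) :
    HpEq (.arrow (.arrow σ σ) (.arrow σ σ))
      (limsupEl (.arrow (.arrow σ σ) (.arrow σ σ)) ζ (fun ξ _ => Iter σ (a ξ)))
      (Iter σ (oLimsup ζ a)) := by
  have h0 : 0 < ζ := zero_lt_one.trans_le hζ1
  have hbdd : BddAbove (a '' Set.Iio ζ) := ⟨ω₁, by rintro _ ⟨ξ, hξ, rfl⟩; exact (ha ξ hξ).le⟩
  have hsup := sSup_image_Ico_lt_omega_one hζ ha
  have hβ : oLimsup ζ a < ω₁ := (oLimsup_le_sSup_image_Ico h0).trans_lt (hsup 0)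
  constructor
  · obtain ⟨γ₀, hγ₀, hle⟩ := exists_forall_le_oLimsup h0 hbdd
    refine limsupEl_hpLe hγ₀ fun ξ hξ hγ₀ξ => (hpLe_arrow_self_iff₂ _ _).2 fun f hf x hx => ?_
    exact iter_hpLe_iter (hle ξ ⟨hγ₀ξ, hξ⟩) hβ hf hx
  · refine hpLe_limsupEl h0 fun γ hγ => (hpLe_arrow_self_iff₂ _ _).2 fun f hf x hx => ?_
    have hne : (a '' Set.Ico γ ζ).Nonempty := ⟨a γ, γ, ⟨le_rfl, hγ⟩, rfl⟩
    have hS := isLUB_csSup hne (hbdd.mono (Set.image_mono Set.Ico_subset_Iio_self))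
    refine (iter_hpLe_iter (oLimsup_le_sSup_image_Ico hγ) (hsup γ) hf hx).trans
      (iter_hpLe_of_isLUB hS hne (hsup γ) hf hx ?_)
    rintro _ ⟨ξ, ⟨hγξ, hξ⟩, rfl⟩
    exact (hpLe_arrow_self_iff₂ _ _).1
      (hpLe_supEl_tailSet (f := fun ξ _ => Iter σ (a ξ)) hζ hξ hγξ) f hf x hx

end IterOrd
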